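/- Every irreducible inclusion representation of a finite poset P with a unique minimal element has ground set of size at most |P| − 1. -/

import Mathlib

open scoped Classical

/-- `S` is an inclusion representation of the poset `α`. -/
def IsRepr {α β : Type} [PartialOrder α] (S : α → Finset β) : Prop :=
  ∀ x y : α, x ≤ y ↔ S x ⊆ S y

/-- The ground set of a representation. -/
noncomputable def ground {α β : Type} [Fintype α] (S : α → Finset β) : Finset β :=
  Finset.univ.biUnion S

/-- `S` is a reduction of `T`. -/
def IsReduction {α β γ : Type} [Fintype α] (S : α → Finset β) (T : α → Finset γ) : Prop :=
  (ground S).card ≤ (ground T).card ∧ ∀ x, (S x).card ≤ (T x).card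

/-- An inclusion representation is irreducible if it admits no strict reduction. -/
def IrreducibleRepr {α β : Type} [PartialOrder α] [Fintype α] (S : α → Finset β) : Prop :=
  IsRepr S ∧ ∀ T : α → Finset ℕ, IsRepr T → IsReduction T S → IsReduction S T

/-- Maximum ground-set size over irreducible inclusion representations. -/
noncomputable def iir (α : Type) [PartialOrder α] [Fintype α] : ℕ :=
  sSup {w | ∃ S : α → Finset ℕ, IrreducibleRepr S ∧ (ground S).card = w}

/-- Cube height. -/
noncomputable def chHeight (α : Type) [PartialOrder α] [Fintype α] : ℕ :=
  sInf {h | ∃ S : α → Finset ℕ, IsRepr S ∧ ∀ x, (S x).card ≤ h}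

/-- 2-dimension. -/
noncomputable def dim2 (α : Type) [PartialOrder α] [Fintype α] : ℕ :=
  sInf {w | ∃ S : α → Finset ℕ, IsRepr S ∧ (ground S).card = w}

/-- Cube width. -/
noncomputable def cw (α : Type) [PartialOrder α] [Fintype α] : ℕ :=
  sInf {w | ∃ S : α → Finset ℕ, IsRepr S ∧ (ground S).card = w ∧ ∀ x, (S x).card ≤ chHeight α}

/-- Closed down-set `D_P[x]` as a finset. -/
noncomputable def downSet {α : Type} [PartialOrder α] [Fintype α] (x : α) : Finset α :=
  Finset.univ.filter (· ≤ x)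

/-- The canonical inclusion representation. -/
noncomputable def canonical (α : Type) [PartialOrder α] [Fintype α] : α → Finset α :=
  fun x => downSet x

/-- No Block is a Chain Property. -/
def NoBlockChain (α : Type) [PartialOrder α] : Prop :=
  ∀ x : α, ∃ y : α, ¬ x ≤ y ∧ ¬ y ≤ x

/-- Two Down Property. -/
def TwoDown (α : Type) [PartialOrder α] : Prop :=
  ∀ y : α, (∃ a b : α, a ≠ b ∧ a ⋖ y ∧ b ⋖ y) →
    ∃ z : α, (∀ u : α, u < y → u < z) ∧ ¬ y ≤ z ∧ ¬ z ≤ y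

/-- Parallel Pair Property. -/
def ParallelPair (α : Type) [PartialOrder α] : Prop :=
  ∀ x y : α, ¬ x ≤ y → ¬ y ≤ x →
    (∃ y' : α, (∀ u : α, u < x → u < y') ∧ y ≤ y' ∧ ¬ x ≤ y' ∧ ¬ y' ≤ x) ∨
    (∃ x' : α, (∀ u : α, u < y → u < x') ∧ x ≤ x' ∧ ¬ y ≤ x' ∧ ¬ x' ≤ y)

/-- A vertical decomposition of a poset into two non-empty parts. -/
def IsVerticalDecomp {α : Type} [PartialOrder α] (A B : Set α) : Prop :=
  A.Nonempty ∧ B.Nonempty ∧ (∀ x, x ∈ A ∨ x ∈ B) ∧ ∀ x ∈ A, ∀ y ∈ B, x < y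

/-- A block is a chain or a vertical prime. -/
def IsBlock (α : Type) [PartialOrder α] : Prop :=
  (∀ x y : α, x ≤ y ∨ y ≤ x) ∨ ¬ ∃ A B : Set α, IsVerticalDecomp A B

section AuxIrr

variable {α β : Type} [PartialOrder α] [Fintype α]

lemma mem_ground_iff {S : α → Finset β} {g : β} : g ∈ ground S ↔ ∃ x, g ∈ S x := by
  unfold ground
  rw [Finset.mem_biUnion]
  simp

lemma mem_ground_aux {S : α → Finset β} {x : α} {g : β} (h : g ∈ S x) : g ∈ ground S :=
  mem_ground_iff.mpr ⟨x, h⟩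

/-- The set of elements `u` at which some member of `G` "first appears". -/
noncomputable def newAt (S : α → Finset β) (G : Finset β) : Finset α :=
  Finset.univ.filter (fun u => ∃ g ∈ G, g ∈ S u ∧ ∀ v : α, v < u → g ∉ S v)

end AuxIrr

/-- irreducible representations of posets with a unique minimal element
use at most `|P| - 1` elements. -/
theorem irreducible_unique_min (α : Type) {β : Type} [PartialOrder α] [Fintype α]
    (hmin : ∃! m : α, IsMin m)
    (S : α → Finset β) (hS : IrreducibleRepr S) :
    (ground S).card ≤ Fintype.card α - 1 := by
  classical
  obtain ⟨hRepr, hIrr⟩ := hS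
  obtain ⟨m, hmMin, hmUniq⟩ := hmin
  -- `m` is a bottom element
  have hbot : ∀ x : α, m ≤ x := by
    intro x
    obtain ⟨b, hbx, hbMin⟩ := exists_minimal_le_of_wellFoundedLT (P := fun _ : α => True) (a := x) trivial
    have hb : IsMin b := by
      intro c hc
      exact hbMin.2 trivial hc
    have : b = m := hmUniq b hb
    exact this ▸ hbx
  have hmono : ∀ {x y : α}, x ≤ y → S x ⊆ S y := fun {x y} h => (hRepr x y).mp h
  -- injective encodings into ℕ
  set eβ : β → ℕ := fun b =>
    if h : b ∈ ground S then 2 * ((Fintype.equivFin (↥(ground S))) ⟨b, h⟩ : ℕ) else 0 with heβ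
  set eα : α → ℕ := fun a => 2 * ((Fintype.equivFin α) a : ℕ) + 1 with heα
  have hevenβ : ∀ b, Even (eβ b) := by
    intro b
    by_cases h : b ∈ ground S
    · simp only [heβ, dif_pos h]
      exact ⟨_, (two_mul _)⟩
    · simp only [heβ, dif_neg h]
      exact Even.zero
  have hoddα : ∀ a, Odd (eα a) := fun a => ⟨_, rfl⟩
  have hβα : ∀ b a, eβ b ≠ eα a := by
    intro b a h
    have := hoddα a
    rw [← h] at this
    exact (Nat.not_odd_iff_even.mpr (hevenβ b)) this
  have hinjβ : ∀ b₁ ∈ ground S, ∀ b₂ ∈ ground S, eβ b₁ = eβ b₂ → b₁ = b₂ := by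
    intro b₁ h₁ b₂ h₂ h
    simp only [heβ, dif_pos h₁, dif_pos h₂] at h
    have h' : ((Fintype.equivFin (↥(ground S))) ⟨b₁, h₁⟩ : ℕ) =
        ((Fintype.equivFin (↥(ground S))) ⟨b₂, h₂⟩ : ℕ) := by omega
    have := (Fintype.equivFin (↥(ground S))).injective (Fin.val_injective h')
    exact congrArg Subtype.val this
  have hinjα : Function.Injective eα := by
    intro a₁ a₂ h
    simp only [heα] at h
    have h' : ((Fintype.equivFin α) a₁ : ℕ) = ((Fintype.equivFin α) a₂ : ℕ) := by omega
    exact (Fintype.equivFin α).injective (Fin.val_injective h')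
  -- Step A : S m = ∅
  have hSm : S m = ∅ := by
    set T₀ : α → Finset ℕ := fun z => (S z \ S m).image eβ with hT₀
    have hT₀repr : IsRepr T₀ := by
      intro x y
      constructor
      · intro hxy
        exact Finset.image_subset_image (Finset.sdiff_subset_sdiff (hmono hxy) le_rfl)
      · intro hsub
        by_contra hxy
        have hnsub : ¬ S x ⊆ S y := fun h => hxy ((hRepr x y).mpr h)
        obtain ⟨g, hgx, hgy⟩ := Finset.not_subset.mp hnsub
        have hgm : g ∉ S m := fun h => hgy (hmono (hbot y) h)
        have hmem : eβ g ∈ T₀ x :=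
          Finset.mem_image.mpr ⟨g, Finset.mem_sdiff.mpr ⟨hgx, hgm⟩, rfl⟩
        obtain ⟨g', hg', heq⟩ := Finset.mem_image.mp (hsub hmem)
        have hg'y := (Finset.mem_sdiff.mp hg').1
        have : g' = g := hinjβ g' (mem_ground_aux hg'y) g (mem_ground_aux hgx) heq
        exact hgy (this ▸ hg'y)
    have hT₀red : IsReduction T₀ S := by
      constructor
      · have hsub : ground T₀ ⊆ (ground S).image eβ := by
          intro t ht
          obtain ⟨z, hz⟩ := mem_ground_iff.mp ht
          obtain ⟨g, hg, rfl⟩ := Finset.mem_image.mp hz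
          exact Finset.mem_image.mpr ⟨g, mem_ground_aux (Finset.mem_sdiff.mp hg).1, rfl⟩
        exact (Finset.card_le_card hsub).trans Finset.card_image_le
      · intro x
        exact Finset.card_image_le.trans (Finset.card_le_card Finset.sdiff_subset)
    have := (hIrr T₀ hT₀repr hT₀red).2 m
    simp only [hT₀, Finset.sdiff_self, Finset.image_empty, Finset.card_empty,
      Nat.le_zero, Finset.card_eq_zero] at this
    exact this
  -- setup
  set n := Fintype.card α with hn
  have hnpos : 1 ≤ n := Fintype.card_pos_iff.mpr ⟨m⟩
  by_contra hcon
  push_neg at hcon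
  have hgeq : n ≤ (ground S).card := by omega
  have hgne : (ground S).Nonempty := Finset.card_pos.mp (by omega)
  obtain ⟨g₀, hg₀⟩ := hgne
  -- newAt is always within univ.erase m
  have hXsub : ∀ G : Finset β, newAt S G ⊆ Finset.univ.erase m := by
    intro G u hu
    obtain ⟨-, g, hgG, hgu, -⟩ := Finset.mem_filter.mp hu
    refine Finset.mem_erase.mpr ⟨?_, Finset.mem_univ u⟩
    rintro rfl
    rw [hSm] at hgu
    exact absurd hgu (Finset.notMem_empty g)
  have hXcard : ∀ G : Finset β, (newAt S G).card ≤ n - 1 := by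
    intro G
    have := Finset.card_le_card (hXsub G)
    rwa [Finset.card_erase_of_mem (Finset.mem_univ m), Finset.card_univ] at this
  -- choose a minimum-cardinality "violator"
  have hviol : ground S ∈ (ground S).powerset.filter
      (fun G => (newAt S G).card < G.card) := by
    refine Finset.mem_filter.mpr ⟨Finset.mem_powerset.mpr le_rfl, ?_⟩
    have := hXcard (ground S)
    omega
  obtain ⟨G, hGmem, hGmin⟩ := Finset.exists_min_image _ Finset.card ⟨_, hviol⟩
  obtain ⟨hGsub', hGviol⟩ := Finset.mem_filter.mp hGmem
  have hGsub : G ⊆ ground S := Finset.mem_powerset.mp hGsub'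
  have hminviol : ∀ G' : Finset β, G' ⊆ ground S → G'.card < G.card →
      G'.card ≤ (newAt S G').card := by
    intro G' hsub hlt
    by_contra h
    push_neg at h
    have : G' ∈ (ground S).powerset.filter (fun G => (newAt S G).card < G.card) :=
      Finset.mem_filter.mpr ⟨Finset.mem_powerset.mpr hsub, h⟩
    exact absurd (hGmin G' this) (by omega)
  set X : Finset α := newAt S G with hX
  -- Hall's condition for the bipartite graph between X and G
  set t : {x // x ∈ X} → Finset β :=
    fun x => G.filter (fun g => g ∈ S x.1 ∧ ∀ v : α, v < x.1 → g ∉ S v) with ht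
  have hHall : ∀ s : Finset {x // x ∈ X}, s.card ≤ (s.biUnion t).card := by
    intro s
    rcases s.eq_empty_or_nonempty with rfl | hs
    · simp
    set N := s.biUnion t with hN
    have hNG : N ⊆ G := by
      intro g hg
      obtain ⟨x, -, hgx⟩ := Finset.mem_biUnion.mp hg
      exact Finset.mem_of_mem_filter g hgx
    have hNne : N.Nonempty := by
      obtain ⟨x, hx⟩ := hs
      obtain ⟨-, g, hgG, hgu, hgmin⟩ := Finset.mem_filter.mp x.2
      exact ⟨g, Finset.mem_biUnion.mpr ⟨x, hx, Finset.mem_filter.mpr ⟨hgG, hgu, hgmin⟩⟩⟩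
    set G'' := G \ N with hG''
    have hGcard : G''.card + N.card = G.card := Finset.card_sdiff_add_card_eq_card hNG
    have hG''lt : G''.card < G.card := by
      have := Finset.card_pos.mpr hNne
      omega
    have h1 : G''.card ≤ (newAt S G'').card :=
      hminviol G'' ((Finset.sdiff_subset).trans hGsub) hG''lt
    -- newAt S G'' ⊆ X \ (s.image val)
    have h2 : newAt S G'' ⊆ X \ (s.image Subtype.val) := by
      intro u hu
      obtain ⟨hu1, g, hgG'', hgu, hgmin⟩ := Finset.mem_filter.mp hu
      have hgG : g ∈ G := (Finset.mem_sdiff.mp hgG'').1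
      have hgN : g ∉ N := (Finset.mem_sdiff.mp hgG'').2
      refine Finset.mem_sdiff.mpr ⟨Finset.mem_filter.mpr ⟨hu1, g, hgG, hgu, hgmin⟩, ?_⟩
      intro hmem
      obtain ⟨x, hxs, hxu⟩ := Finset.mem_image.mp hmem
      apply hgN
      refine Finset.mem_biUnion.mpr ⟨x, hxs, Finset.mem_filter.mpr ⟨hgG, ?_, ?_⟩⟩
      · rw [hxu]; exact hgu
      · intro v hv; rw [hxu] at hv; exact hgmin v hv
    have himgsub : s.image Subtype.val ⊆ X := by
      intro u hu
      obtain ⟨x, -, hxu⟩ := Finset.mem_image.mp hu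
      exact hxu ▸ x.2
    have himgcard : (s.image Subtype.val).card = s.card :=
      Finset.card_image_of_injective s Subtype.val_injective
    have h3 : (X \ (s.image Subtype.val)).card + (s.image Subtype.val).card = X.card :=
      Finset.card_sdiff_add_card_eq_card himgsub
    have h4 := Finset.card_le_card h2
    have h5 : X.card < G.card := hGviol
    omega
  obtain ⟨σ, hσinj, hσmem⟩ := (Finset.all_card_le_biUnion_card_iff_exists_injective t).mp hHall
  -- the reducing representation
  set T : α → Finset ℕ := fun z =>
    ((S z \ G).image eβ) ∪ ((X.filter (fun u => u ≤ z)).image eα) with hT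
  have hTrepr : IsRepr T := by
    intro x y
    constructor
    · intro hxy
      apply Finset.union_subset_union
      · exact Finset.image_subset_image (Finset.sdiff_subset_sdiff (hmono hxy) le_rfl)
      · apply Finset.image_subset_image
        intro u hu
        obtain ⟨hu1, hu2⟩ := Finset.mem_filter.mp hu
        exact Finset.mem_filter.mpr ⟨hu1, hu2.trans hxy⟩
    · intro hsub
      by_contra hxy
      have hnsub : ¬ S x ⊆ S y := fun h => hxy ((hRepr x y).mpr h)
      obtain ⟨g, hgx, hgy⟩ := Finset.not_subset.mp hnsub
      by_cases hgG : g ∈ G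
      · -- use a minimal appearance point of g below x
        obtain ⟨u, hux, huMin⟩ :=
          exists_minimal_le_of_wellFoundedLT (P := fun v : α => g ∈ S v) (a := x) hgx
        have hgu : g ∈ S u := huMin.1
        have humin : ∀ v : α, v < u → g ∉ S v := by
          intro v hv hgv
          exact absurd (huMin.2 hgv (le_of_lt hv)) (not_le_of_gt hv)
        have huX : u ∈ X := Finset.mem_filter.mpr ⟨Finset.mem_univ u, g, hgG, hgu, humin⟩
        have hmem : eα u ∈ T x := by
          apply Finset.mem_union_right
          exact Finset.mem_image.mpr ⟨u, Finset.mem_filter.mpr ⟨huX, hux⟩, rfl⟩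
        rcases Finset.mem_union.mp (hsub hmem) with h | h
        · obtain ⟨g', -, heq⟩ := Finset.mem_image.mp h
          exact hβα g' u heq
        · obtain ⟨u', hu', heq⟩ := Finset.mem_image.mp h
          have : u' = u := hinjα heq
          subst this
          have huy : u' ≤ y := (Finset.mem_filter.mp hu').2
          exact hgy (hmono huy hgu)
      · have hmem : eβ g ∈ T x := by
          apply Finset.mem_union_left
          exact Finset.mem_image.mpr ⟨g, Finset.mem_sdiff.mpr ⟨hgx, hgG⟩, rfl⟩
        rcases Finset.mem_union.mp (hsub hmem) with h | h
        · obtain ⟨g', hg', heq⟩ := Finset.mem_image.mp h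
          have hg'y := (Finset.mem_sdiff.mp hg').1
          have : g' = g := hinjβ g' (mem_ground_aux hg'y) g (mem_ground_aux hgx) heq
          exact hgy (this ▸ hg'y)
        · obtain ⟨u, -, heq⟩ := Finset.mem_image.mp h
          exact hβα g u heq.symm
  -- cardinality facts
  have hcardT : ∀ z, (T z).card ≤ (S z).card := by
    intro z
    have hkey : (X.filter (fun u => u ≤ z)).card ≤ (S z ∩ G).card := by
      apply Finset.card_le_card_of_injOn (fun u => if h : u ∈ X then σ ⟨u, h⟩ else g₀)
      · intro u hu
        obtain ⟨huX, huz⟩ := Finset.mem_filter.mp hu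
        simp only [dif_pos huX]
        have := hσmem ⟨u, huX⟩
        obtain ⟨hgG, hgu, -⟩ := Finset.mem_filter.mp this
        exact Finset.mem_inter.mpr ⟨hmono huz hgu, hgG⟩
      · intro u hu u' hu' heq
        have huX : u ∈ X := (Finset.mem_filter.mp (Finset.mem_coe.mp hu)).1
        have huX' : u' ∈ X := (Finset.mem_filter.mp (Finset.mem_coe.mp hu')).1
        simp only [dif_pos huX, dif_pos huX'] at heq
        exact congrArg Subtype.val (hσinj heq)
    calc (T z).card ≤ ((S z \ G).image eβ).card + ((X.filter (fun u => u ≤ z)).image eα).card :=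
          Finset.card_union_le _ _
      _ ≤ (S z \ G).card + (X.filter (fun u => u ≤ z)).card := by
          exact Nat.add_le_add Finset.card_image_le Finset.card_image_le
      _ ≤ (S z \ G).card + (S z ∩ G).card := by omega
      _ = (S z).card := Finset.card_sdiff_add_card_inter _ _
  have hgroundT : (ground T).card < (ground S).card := by
    have hsub : ground T ⊆ ((ground S \ G).image eβ) ∪ (X.image eα) := by
      intro a ha
      obtain ⟨z, hz⟩ := mem_ground_iff.mp ha
      rcases Finset.mem_union.mp hz with h | h
      · obtain ⟨g, hg, rfl⟩ := Finset.mem_image.mp h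
        obtain ⟨hg1, hg2⟩ := Finset.mem_sdiff.mp hg
        exact Finset.mem_union_left _
          (Finset.mem_image.mpr ⟨g, Finset.mem_sdiff.mpr ⟨mem_ground_aux hg1, hg2⟩, rfl⟩)
      · obtain ⟨u, hu, rfl⟩ := Finset.mem_image.mp h
        exact Finset.mem_union_right _
          (Finset.mem_image.mpr ⟨u, (Finset.mem_filter.mp hu).1, rfl⟩)
    have h1 := Finset.card_le_card hsub
    have h2 := Finset.card_union_le ((ground S \ G).image eβ) (X.image eα)
    have h3 : ((ground S \ G).image eβ).card ≤ (ground S \ G).card := Finset.card_image_le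
    have h4 : (X.image eα).card ≤ X.card := Finset.card_image_le
    have h5 : (ground S \ G).card + G.card = (ground S).card :=
      Finset.card_sdiff_add_card_eq_card hGsub
    have h6 : X.card < G.card := hGviol
    omega
  have hTred : IsReduction T S := ⟨le_of_lt hgroundT, hcardT⟩
  have := (hIrr T hTrepr hTred).1
  omega
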